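/- Let w : ℝⁿ → ℝ be a bounded C² function whose graph is a minimal hypersurface (i.e. div(dw/(1+|dw|²)^{1/2}) = 0). Then for every r > 0 the area of the graph of w over the ball B_r satisfies ∫_{B_r} (1+|dw|²)^{1/2} dx ≤ C rⁿ (1 + r^{-1} ‖w‖_∞) for a constant C = C(n). -/

import Mathlib

open MeasureTheory

/-- The `i`-th partial derivative of `f : ℝⁿ → ℝ`. -/
noncomputable def partialDeriv' (n : ℕ) (f : EuclideanSpace ℝ (Fin n) → ℝ) (i : Fin n)
    (x : EuclideanSpace ℝ (Fin n)) : ℝ :=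
  fderiv ℝ f x (EuclideanSpace.single i 1)

/-- The squared length `|df|²` of the gradient of `f : ℝⁿ → ℝ`. -/
noncomputable def gradSq (n : ℕ) (f : EuclideanSpace ℝ (Fin n) → ℝ)
    (x : EuclideanSpace ℝ (Fin n)) : ℝ :=
  ∑ i, (partialDeriv' n f i x) ^ 2

/-- `div(df/√(1+|df|²))`, the negative of the mean curvature of the graph of `f`. -/
noncomputable def minimalOp (n : ℕ) (f : EuclideanSpace ℝ (Fin n) → ℝ)
    (x : EuclideanSpace ℝ (Fin n)) : ℝ :=
  ∑ i, partialDeriv' n (fun y => partialDeriv' n f i y / Real.sqrt (1 + gradSq n f y)) i x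

/-! Test the minimal surface equation `div X = 0`, `X = dw/√(1+|dw|²)`, against `w η`, where the
cutoff `η` is `1` on `B_r`, supported in `B_{2r}`, with `|dη| ≲ 1/r`. Since
`⟨dw, X⟩ = |dw|²/√(1+|dw|²)` and `|X| ≤ 1`, this gives `∫ η |dw|²/√(1+|dw|²) ≲ ‖w‖_∞ ∫ |dη|`;
adding `∫ η/√(1+|dw|²) ≤ ∫ η` bounds the area `∫ η √(1+|dw|²)` by `|B_{2r}| (1 + C ‖w‖_∞ / r)`. -/

open Metric Set

section Cutoff

variable {E : Type*} [NormedAddCommGroup E] [NormedSpace ℝ E] [FiniteDimensional ℝ E]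
  [HasContDiffBump E]

theorem exists_cutoff_norm_fderiv_le :
    ∃ K : ℝ, 0 ≤ K ∧ ∀ r : ℝ, 0 < r → ∃ η : E → ℝ, ContDiff ℝ 1 η ∧
      (∀ x, 0 ≤ η x ∧ η x ≤ 1) ∧ EqOn η 1 (closedBall 0 r) ∧
      tsupport η ⊆ closedBall 0 (2 * r) ∧ ∀ x, ‖fderiv ℝ η x‖ ≤ K * r⁻¹ := by
  let f : ContDiffBump (0 : E) := ⟨1, 2, one_pos, one_lt_two⟩
  obtain ⟨K, hK⟩ := (f.hasCompactSupport.fderiv ℝ).exists_bound_of_continuous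
    ((f.contDiff (n := 1)).continuous_fderiv one_ne_zero)
  refine ⟨K, (norm_nonneg _).trans (hK 0), fun r hr =>
    ⟨fun x => f (r⁻¹ • x), ?_, ?_, ?_, ?_, ?_⟩⟩
  · exact f.contDiff.comp (contDiff_const_smul _)
  · exact fun x => ⟨f.nonneg, f.le_one⟩
  · intro x hx
    apply f.one_of_mem_closedBall
    rw [mem_closedBall_zero_iff] at hx ⊢
    rw [norm_smul, norm_inv, Real.norm_of_nonneg hr.le]
    exact inv_mul_le_of_le_mul₀ hr.le zero_le_one (by simpa [f] using hx)
  · refine closure_minimal (fun x hx => ?_) isClosed_closedBall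
    have : r⁻¹ • x ∈ ball (0 : E) 2 := f.support_eq ▸ hx
    rw [mem_ball_zero_iff, norm_smul, norm_inv, Real.norm_of_nonneg hr.le] at this
    rw [mem_closedBall_zero_iff]
    exact (le_of_lt ((inv_mul_lt_iff₀ hr).1 this)).trans_eq (mul_comm _ _)
  · intro x
    rw [fderiv_comp_smul, norm_smul, norm_inv, Real.norm_of_nonneg hr.le, mul_comm]
    gcongr
    exact hK _

end Cutoff

theorem integral_le_mul_measureReal_of_support_subset {X : Type*} [MeasurableSpace X]
    {μ : Measure X} {f : X → ℝ} {s : Set X} {C : ℝ} (hs : μ s < ⊤)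
    (hfs : Function.support f ⊆ s) (hC : ∀ x ∈ s, ‖f x‖ ≤ C) :
    ∫ x, f x ∂μ ≤ C * μ.real s := by
  rw [← setIntegral_eq_integral_of_forall_compl_eq_zero
    fun x hx => Function.notMem_support.1 fun h => hx (hfs h)]
  exact (Real.le_norm_self _).trans (norm_setIntegral_le_of_norm_le_const hs hC)

section MinimalGraph

variable {n : ℕ}

theorem gradSq_nonneg (f : EuclideanSpace ℝ (Fin n) → ℝ) (x : EuclideanSpace ℝ (Fin n)) :
    0 ≤ gradSq n f x :=
  Finset.sum_nonneg fun _ _ => sq_nonneg _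

theorem abs_partialDeriv'_le_norm_fderiv (f : EuclideanSpace ℝ (Fin n) → ℝ) (i : Fin n)
    (x : EuclideanSpace ℝ (Fin n)) : |partialDeriv' n f i x| ≤ ‖fderiv ℝ f x‖ := by
  simpa [partialDeriv'] using (fderiv ℝ f x).le_opNorm (EuclideanSpace.single i 1)

theorem contDiff_partialDeriv' {m : WithTop ℕ∞} {f : EuclideanSpace ℝ (Fin n) → ℝ}
    (hf : ContDiff ℝ (m + 1) f) (i : Fin n) : ContDiff ℝ m (partialDeriv' n f i) :=
  (hf.fderiv_right le_rfl).clm_apply contDiff_const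

theorem continuous_partialDeriv' {f : EuclideanSpace ℝ (Fin n) → ℝ} (hf : ContDiff ℝ 1 f)
    (i : Fin n) : Continuous (partialDeriv' n f i) :=
  (contDiff_partialDeriv' (m := 0) (by simpa using hf) i).continuous

theorem partialDeriv'_of_notMem_tsupport {f : EuclideanSpace ℝ (Fin n) → ℝ}
    {x : EuclideanSpace ℝ (Fin n)} (hx : x ∉ tsupport f) (i : Fin n) :
    partialDeriv' n f i x = 0 := by
  simp [partialDeriv', fderiv_of_notMem_tsupport ℝ hx]

theorem partialDeriv'_mul {f g : EuclideanSpace ℝ (Fin n) → ℝ}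
    {x : EuclideanSpace ℝ (Fin n)} (hf : DifferentiableAt ℝ f x) (hg : DifferentiableAt ℝ g x)
    (i : Fin n) :
    partialDeriv' n (fun y => f y * g y) i x =
      partialDeriv' n f i x * g x + f x * partialDeriv' n g i x := by
  simp only [partialDeriv', fderiv_fun_mul hf hg, FunLike.coe_add,
    FunLike.coe_smul, Pi.add_apply, Pi.smul_apply, smul_eq_mul]
  ring

theorem integral_partialDeriv'_mul_eq_neg {f g : EuclideanSpace ℝ (Fin n) → ℝ}
    (hf : ContDiff ℝ 1 f) (hg : ContDiff ℝ 1 g) (hgc : HasCompactSupport g) (i : Fin n) :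
    ∫ x, partialDeriv' n f i x * g x = -∫ x, f x * partialDeriv' n g i x := by
  unfold partialDeriv'
  rw [integral_mul_fderiv_eq_neg_fderiv_mul_of_integrable, neg_neg]
  · exact ((continuous_partialDeriv' hf i).mul hg.continuous).integrable_of_hasCompactSupport
      hgc.mul_left
  · exact (hf.continuous.mul (continuous_partialDeriv' hg i)).integrable_of_hasCompactSupport
      (hgc.fderiv_apply (𝕜 := ℝ) _).mul_left
  · exact (hf.continuous.mul hg.continuous).integrable_of_hasCompactSupport hgc.mul_left
  · exact fun x _ => hf.differentiable one_ne_zero x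
  · exact fun x _ => hg.differentiable one_ne_zero x

theorem integral_sum_mul_partialDeriv'_eq_zero {X : Fin n → EuclideanSpace ℝ (Fin n) → ℝ}
    (hX : ∀ i, ContDiff ℝ 1 (X i)) (hdiv : ∀ x, ∑ i, partialDeriv' n (X i) i x = 0)
    {g : EuclideanSpace ℝ (Fin n) → ℝ} (hg : ContDiff ℝ 1 g) (hgc : HasCompactSupport g) :
    ∫ x, ∑ i, X i x * partialDeriv' n g i x = 0 := by
  have hint : ∀ i, Integrable fun x => X i x * partialDeriv' n g i x := fun i =>
    ((hX i).continuous.mul (continuous_partialDeriv' hg i)).integrable_of_hasCompactSupport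
      (hgc.fderiv_apply (𝕜 := ℝ) _).mul_left
  have hint' : ∀ i, Integrable fun x => partialDeriv' n (X i) i x * g x := fun i =>
    ((continuous_partialDeriv' (hX i) i).mul hg.continuous).integrable_of_hasCompactSupport
      hgc.mul_left
  rw [integral_finsetSum _ fun i _ => hint i, ← neg_eq_zero, ← Finset.sum_neg_distrib]
  simp_rw [← integral_partialDeriv'_mul_eq_neg (hX _) hg hgc]
  rw [← integral_finsetSum _ fun i _ => hint' i]
  simp [← Finset.sum_mul, hdiv]

noncomputable def minimalFlux (n : ℕ) (f : EuclideanSpace ℝ (Fin n) → ℝ) (i : Fin n)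
    (x : EuclideanSpace ℝ (Fin n)) : ℝ :=
  partialDeriv' n f i x / √(1 + gradSq n f x)

theorem minimalOp_eq_sum_partialDeriv'_minimalFlux (f : EuclideanSpace ℝ (Fin n) → ℝ)
    (x : EuclideanSpace ℝ (Fin n)) :
    minimalOp n f x = ∑ i, partialDeriv' n (minimalFlux n f i) i x :=
  rfl

theorem abs_minimalFlux_le_one (f : EuclideanSpace ℝ (Fin n) → ℝ) (i : Fin n)
    (x : EuclideanSpace ℝ (Fin n)) : |minimalFlux n f i x| ≤ 1 := by
  have hsq : partialDeriv' n f i x ^ 2 ≤ gradSq n f x :=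
    Finset.single_le_sum (f := fun j => partialDeriv' n f j x ^ 2) (fun _ _ => sq_nonneg _)
      (Finset.mem_univ i)
  have hpos : 0 < √(1 + gradSq n f x) := Real.sqrt_pos.2 (by linarith [gradSq_nonneg f x])
  rw [minimalFlux, abs_div, abs_of_pos hpos, div_le_one hpos]
  exact Real.abs_le_sqrt (by linarith)

theorem contDiff_gradSq {m : WithTop ℕ∞} {f : EuclideanSpace ℝ (Fin n) → ℝ}
    (hf : ContDiff ℝ (m + 1) f) : ContDiff ℝ m (gradSq n f) :=
  ContDiff.sum fun j _ => (contDiff_partialDeriv' hf j).pow 2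

theorem contDiff_sqrt_one_add_gradSq {m : WithTop ℕ∞} {f : EuclideanSpace ℝ (Fin n) → ℝ}
    (hf : ContDiff ℝ (m + 1) f) : ContDiff ℝ m fun x => √(1 + gradSq n f x) :=
  (contDiff_const.add (contDiff_gradSq hf)).sqrt fun x => by linarith [gradSq_nonneg f x]

theorem continuous_gradSq_div_sqrt {f : EuclideanSpace ℝ (Fin n) → ℝ}
    (hf : ContDiff ℝ 1 f) :
    Continuous fun x => gradSq n f x / √(1 + gradSq n f x) :=
  (contDiff_gradSq (m := 0) hf).continuous.div
    (contDiff_sqrt_one_add_gradSq (m := 0) hf).continuous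
    fun x => (Real.sqrt_pos.2 (by linarith [gradSq_nonneg f x])).ne'

theorem contDiff_minimalFlux {m : WithTop ℕ∞} {f : EuclideanSpace ℝ (Fin n) → ℝ}
    (hf : ContDiff ℝ (m + 1) f) (i : Fin n) : ContDiff ℝ m (minimalFlux n f i) :=
  (contDiff_partialDeriv' hf i).div (contDiff_sqrt_one_add_gradSq hf)
    fun x => (Real.sqrt_pos.2 (by linarith [gradSq_nonneg f x])).ne'

theorem sum_minimalFlux_mul_partialDeriv' (f : EuclideanSpace ℝ (Fin n) → ℝ)
    (x : EuclideanSpace ℝ (Fin n)) :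
    ∑ i, minimalFlux n f i x * partialDeriv' n f i x = gradSq n f x / √(1 + gradSq n f x) := by
  simp only [minimalFlux, gradSq, Finset.sum_div]
  exact Finset.sum_congr rfl fun i _ => by ring

theorem abs_sum_minimalFlux_mul_partialDeriv'_le (f g : EuclideanSpace ℝ (Fin n) → ℝ)
    (x : EuclideanSpace ℝ (Fin n)) :
    |∑ i, minimalFlux n f i x * partialDeriv' n g i x| ≤ n * ‖fderiv ℝ g x‖ := by
  refine (Finset.abs_sum_le_sum_abs _ _).trans ?_
  calc ∑ i, |minimalFlux n f i x * partialDeriv' n g i x|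
      ≤ ∑ _i : Fin n, ‖fderiv ℝ g x‖ := Finset.sum_le_sum fun i _ => by
        rw [abs_mul]
        exact (mul_le_of_le_one_left (abs_nonneg _) (abs_minimalFlux_le_one f i x)).trans
          (abs_partialDeriv'_le_norm_fderiv g i x)
    _ = n * ‖fderiv ℝ g x‖ := by simp

theorem integral_mul_gradSq_div_sqrt_eq {w η : EuclideanSpace ℝ (Fin n) → ℝ}
    (hw : ContDiff ℝ 2 w) (hmin : ∀ x, minimalOp n w x = 0) (hη : ContDiff ℝ 1 η)
    (hηc : HasCompactSupport η) :
    ∫ x, η x * (gradSq n w x / √(1 + gradSq n w x)) =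
      -∫ x, w x * ∑ i, minimalFlux n w i x * partialDeriv' n η i x := by
  have hw1 : ContDiff ℝ 1 w := hw.of_le (by norm_num)
  have hX : ∀ i, ContDiff ℝ 1 (minimalFlux n w i) := contDiff_minimalFlux (m := 1) hw
  have hweak := integral_sum_mul_partialDeriv'_eq_zero hX
    (fun x => (minimalOp_eq_sum_partialDeriv'_minimalFlux w x).symm.trans (hmin x))
    (hw1.mul hη) hηc.mul_left
  have hsplit : ∀ x, ∑ i, minimalFlux n w i x * partialDeriv' n (fun y => w y * η y) i x =
      η x * (gradSq n w x / √(1 + gradSq n w x)) +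
        w x * ∑ i, minimalFlux n w i x * partialDeriv' n η i x := by
    intro x
    simp only [partialDeriv'_mul (hw1.differentiable one_ne_zero x)
      (hη.differentiable one_ne_zero x), ← sum_minimalFlux_mul_partialDeriv', Finset.mul_sum,
      ← Finset.sum_add_distrib]
    exact Finset.sum_congr rfl fun i _ => by ring
  have hint₁ : Integrable fun x => η x * (gradSq n w x / √(1 + gradSq n w x)) :=
    (hη.continuous.mul (continuous_gradSq_div_sqrt hw1)).integrable_of_hasCompactSupport
      hηc.mul_right
  have hint₂ : Integrable fun x => w x * ∑ i, minimalFlux n w i x * partialDeriv' n η i x :=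
    (hw1.continuous.mul (continuous_finsetSum _ fun i _ =>
      (hX i).continuous.mul (continuous_partialDeriv' hη i))).integrable_of_hasCompactSupport
      (hηc.mono' fun x hx => by_contra fun h => hx (by simp [partialDeriv'_of_notMem_tsupport h]))
  simp_rw [hsplit] at hweak
  rw [integral_add hint₁ hint₂] at hweak
  linarith

theorem integral_mul_sqrt_one_add_gradSq_le {w η : EuclideanSpace ℝ (Fin n) → ℝ} {M : ℝ}
    (hw : ContDiff ℝ 2 w) (hM : ∀ x, |w x| ≤ M) (hmin : ∀ x, minimalOp n w x = 0)
    (hη : ContDiff ℝ 1 η) (hηc : HasCompactSupport η) (hη0 : ∀ x, 0 ≤ η x) :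
    ∫ x, η x * √(1 + gradSq n w x) ≤
      (∫ x, η x) + n * M * ∫ x, ‖fderiv ℝ η x‖ := by
  have hw1 : ContDiff ℝ 1 w := hw.of_le (by norm_num)
  have hs1 : ∀ x, 1 ≤ √(1 + gradSq n w x) := fun x =>
    Real.one_le_sqrt.2 (by linarith [gradSq_nonneg w x])
  have hsplit : ∀ x, η x * √(1 + gradSq n w x) =
      η x / √(1 + gradSq n w x) + η x * (gradSq n w x / √(1 + gradSq n w x)) := fun x => by
    have hsq := Real.sq_sqrt (by linarith [gradSq_nonneg w x] : 0 ≤ 1 + gradSq n w x)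
    field_simp [(zero_lt_one.trans_le (hs1 x)).ne']
    linear_combination η x * hsq
  have hint₁ : Integrable fun x => η x / √(1 + gradSq n w x) :=
    (hη.continuous.div (contDiff_sqrt_one_add_gradSq (m := 1) hw).continuous
      fun x => (zero_lt_one.trans_le (hs1 x)).ne').integrable_of_hasCompactSupport
      (hηc.mono' fun x hx => subset_tsupport η fun h => hx (by simp [h]))
  have hint₂ : Integrable fun x => η x * (gradSq n w x / √(1 + gradSq n w x)) :=
    (hη.continuous.mul (continuous_gradSq_div_sqrt hw1)).integrable_of_hasCompactSupport
      hηc.mul_right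
  have hM0 : 0 ≤ M := (abs_nonneg _).trans (hM 0)
  have hdη : Integrable fun x => n * M * ‖fderiv ℝ η x‖ :=
    ((hη.continuous_fderiv one_ne_zero).norm.integrable_of_hasCompactSupport
      (hηc.fderiv ℝ).norm).const_mul _
  calc ∫ x, η x * √(1 + gradSq n w x)
      = (∫ x, η x / √(1 + gradSq n w x)) +
          ∫ x, η x * (gradSq n w x / √(1 + gradSq n w x)) := by
        simp_rw [hsplit]
        exact integral_add hint₁ hint₂
    _ ≤ (∫ x, η x) + ∫ x, n * M * ‖fderiv ℝ η x‖ := by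
        gcongr ?_ + ?_
        · exact integral_mono hint₁ (hη.continuous.integrable_of_hasCompactSupport hηc)
            fun x => div_le_self (hη0 x) (hs1 x)
        · rw [integral_mul_gradSq_div_sqrt_eq hw hmin hη hηc]
          refine (neg_le_abs _).trans (norm_integral_le_of_norm_le
            (f := fun x => w x * ∑ i, minimalFlux n w i x * partialDeriv' n η i x) hdη
            (.of_forall fun x => ?_))
          rw [Real.norm_eq_abs, abs_mul, mul_assoc, mul_left_comm]
          exact mul_le_mul (hM x) (abs_sum_minimalFlux_mul_partialDeriv'_le w η x)
            (abs_nonneg _) hM0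
    _ = (∫ x, η x) + n * M * ∫ x, ‖fderiv ℝ η x‖ := by rw [integral_const_mul]

theorem setIntegral_ball_sqrt_one_add_gradSq_le {w η : EuclideanSpace ℝ (Fin n) → ℝ}
    {M r R L : ℝ} (hw : ContDiff ℝ 2 w) (hM : ∀ x, |w x| ≤ M)
    (hmin : ∀ x, minimalOp n w x = 0) (hη : ContDiff ℝ 1 η) (hη01 : ∀ x, 0 ≤ η x ∧ η x ≤ 1)
    (hη1 : EqOn η 1 (ball 0 r))
    (hηR : tsupport η ⊆ closedBall 0 R) (hdη : ∀ x, ‖fderiv ℝ η x‖ ≤ L) :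
    ∫ x in ball 0 r, √(1 + gradSq n w x) ≤
      volume.real (closedBall (0 : EuclideanSpace ℝ (Fin n)) R) * (1 + n * M * L) := by
  have hηc : HasCompactSupport η :=
    (isCompact_closedBall _ _).of_isClosed_subset (isClosed_tsupport _) hηR
  have hηint : ∫ x, η x ≤ 1 * volume.real (closedBall (0 : EuclideanSpace ℝ (Fin n)) R) :=
    integral_le_mul_measureReal_of_support_subset measure_closedBall_lt_top
      ((subset_tsupport η).trans hηR) fun x _ => by
        rw [Real.norm_of_nonneg (hη01 x).1]; exact (hη01 x).2
  have hdηint : ∫ x, ‖fderiv ℝ η x‖ ≤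
      L * volume.real (closedBall (0 : EuclideanSpace ℝ (Fin n)) R) :=
    integral_le_mul_measureReal_of_support_subset measure_closedBall_lt_top
      (fun x hx => hηR (support_fderiv_subset ℝ (norm_ne_zero_iff.1 hx)))
      fun x _ => by rw [norm_norm]; exact hdη x
  have hM0 : 0 ≤ M := (abs_nonneg _).trans (hM 0)
  calc ∫ x in ball 0 r, √(1 + gradSq n w x)
      = ∫ x in ball 0 r, η x * √(1 + gradSq n w x) :=
        setIntegral_congr_fun measurableSet_ball fun x hx => by
          rw [hη1 hx, Pi.one_apply, one_mul]
    _ ≤ ∫ x, η x * √(1 + gradSq n w x) :=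
        setIntegral_le_integral
          ((hη.continuous.mul (contDiff_sqrt_one_add_gradSq (m := 1) hw).continuous)
            |>.integrable_of_hasCompactSupport hηc.mul_right)
          (.of_forall fun x => mul_nonneg (hη01 x).1 (Real.sqrt_nonneg _))
    _ ≤ (∫ x, η x) + n * M * ∫ x, ‖fderiv ℝ η x‖ :=
        integral_mul_sqrt_one_add_gradSq_le hw hM hmin hη hηc fun x => (hη01 x).1
    _ ≤ volume.real (closedBall (0 : EuclideanSpace ℝ (Fin n)) R) * (1 + n * M * L) := by
        have := mul_le_mul_of_nonneg_left hdηint (by positivity : (0 : ℝ) ≤ n * M)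
        linear_combination hηint + this

end MinimalGraph

/-- Area bound for bounded entire minimal graphs: there is `C = C(n)` so that if
`w : ℝⁿ → ℝ` is C², `|w| ≤ M`, and the graph of `w` is minimal, then for all `r > 0`,
`∫_{B_r} √(1+|dw|²) ≤ C rⁿ (1 + r⁻¹ M)`. -/
theorem minimal_graph_area_bound (n : ℕ) :
    ∃ C : ℝ, 0 < C ∧ ∀ (w : EuclideanSpace ℝ (Fin n) → ℝ) (M : ℝ),
      ContDiff ℝ 2 w → (∀ x, |w x| ≤ M) → (∀ x, minimalOp n w x = 0) →
      ∀ r : ℝ, 0 < r →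
        (∫ x in Metric.ball (0 : EuclideanSpace ℝ (Fin n)) r,
            Real.sqrt (1 + gradSq n w x)) ≤ C * r ^ n * (1 + r⁻¹ * M) := by
  obtain ⟨K, hK, hcutoff⟩ := exists_cutoff_norm_fderiv_le (E := EuclideanSpace ℝ (Fin n))
  set V := volume.real (closedBall (0 : EuclideanSpace ℝ (Fin n)) 1)
  have hV : 0 < V :=
    ENNReal.toReal_pos (measure_closedBall_pos _ _ one_pos).ne' measure_closedBall_lt_top.ne
  refine ⟨2 ^ n * V * (1 + n * K), by positivity, fun w M hw hM hmin r hr => ?_⟩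
  obtain ⟨η, hη, hη01, hη1, hηr, hdη⟩ := hcutoff r hr
  have hM0 : 0 ≤ M := (abs_nonneg _).trans (hM 0)
  calc _ ≤ volume.real (closedBall (0 : EuclideanSpace ℝ (Fin n)) (2 * r)) *
          (1 + n * M * (K * r⁻¹)) :=
        setIntegral_ball_sqrt_one_add_gradSq_le hw hM hmin hη hη01
          (hη1.mono ball_subset_closedBall) hηr hdη
    _ = 2 ^ n * V * r ^ n * (1 + n * K * (r⁻¹ * M)) := by
        rw [Measure.addHaar_real_closedBall' _ _ (by positivity), finrank_euclideanSpace_fin]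
        ring
    _ ≤ 2 ^ n * V * (1 + n * K) * r ^ n * (1 + r⁻¹ * M) := by
        have : 0 ≤ 2 ^ n * V * r ^ n * (n * K + r⁻¹ * M) := by positivity
        linear_combination this
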